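/- Let a ∈ ℝ and b ∈ ℝ ∪ {+∞} with a < b, let m : [a,b) → ℝ be strictly increasing, continuous from the right at a, differentiable on (a,b) with derivative bounded on every closed subinterval [a',b'] ⊂ (a,b), and satisfying m(x) → +∞ as x → b⁻. Let f : [a,b) → [0,∞) be Riemann integrable on compact subintervals with sup_{[a,b)} f < +∞ and f(x) → 0 as x → b⁻. Then A_m(a,R; m^→[f]) → 0 as R → b⁻. -/

import Mathlib

/-!
The right maximization `g = m^→[f]` is antitone on `[a, b)` (so `g · m'` is integrable on every
`[a, R]`) and tends to `0` at `b` along with `f`. The average is a Cesàro mean of `g` against the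
weight `m' ≥ 0`, whose total mass `∫_a^R m' = m R - m a` tends to `∞`: past a point `r` where
`|g| ≤ ε / 2`, the tail contributes at most `ε / 2`, and the fixed head `∫_a^r g m'` is
eventually swamped by the mass.
-/

open MeasureTheory Set Filter

/-- The integral average `A_m(r,R;f) = (1/(m R - m r)) ∫_r^R f dm`, where the
Riemann–Stieltjes integral `∫_r^R f dm` is expressed as `∫_r^R f(x) m'(x) dx`
(valid since `m` is differentiable with locally bounded derivative). -/
noncomputable def intAvg (m f : ℝ → ℝ) (r R : ℝ) : ℝ :=
  (m R - m r)⁻¹ * ∫ x in r..R, f x * deriv m x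

/-- The right maximization `m^→[f](r) = sup_{x ∈ [r,b)} f x`, for `b ∈ ℝ ∪ {+∞}`. -/
noncomputable def rightMax (b : EReal) (f : ℝ → ℝ) (r : ℝ) : ℝ :=
  sSup (f '' {x : ℝ | r ≤ x ∧ (x : EReal) < b})

/-- The filter of real numbers tending to `b ∈ ℝ ∪ {+∞}` from the left. -/
noncomputable def toBFilter (b : EReal) : Filter ℝ :=
  Filter.comap (Real.toEReal) (nhdsWithin b (Set.Iio b))

open scoped Topology

theorem toBFilter_hasBasis {b : EReal} (hb : b ≠ ⊥) :
    (toBFilter b).HasBasis (· < b) fun l => {x : ℝ | l < x ∧ (x : EReal) < b} :=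
  (nhdsLT_basis_of_exists_lt ⟨⊥, bot_lt_iff_ne_bot.2 hb⟩).comap _

theorem eventually_toBFilter {b : EReal} {c : ℝ} (hc : (c : EReal) < b) :
    ∀ᶠ x in toBFilter b, c < x ∧ (x : EReal) < b := by
  filter_upwards [(toBFilter_hasBasis (ne_bot_of_gt hc)).mem_of_mem hc] with x hx
  exact ⟨EReal.coe_lt_coe_iff.1 hx.1, hx.2⟩

theorem exists_forall_of_eventually_toBFilter {a : ℝ} {b : EReal} (hab : (a : EReal) < b)
    {p : ℝ → Prop} (h : ∀ᶠ x in toBFilter b, p x) :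
    ∃ r : ℝ, a < r ∧ (r : EReal) < b ∧ ∀ x : ℝ, r ≤ x → (x : EReal) < b → p x := by
  obtain ⟨l, hlb, hl⟩ := (toBFilter_hasBasis (ne_bot_of_gt hab)).eventually_iff.1 h
  obtain ⟨r, hr, hrb⟩ := EReal.lt_iff_exists_real_btwn.1 (max_lt hlb hab)
  refine ⟨r, EReal.coe_lt_coe_iff.1 ((le_max_right _ _).trans_lt hr), hrb, fun x hrx hxb => ?_⟩
  exact hl ⟨(le_max_left _ _).trans_lt (hr.trans_le (EReal.coe_le_coe_iff.2 hrx)), hxb⟩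

theorem Icc_subset_of_coe_lt {a R : ℝ} {b : EReal} (hRb : (R : EReal) < b) :
    Icc a R ⊆ {x : ℝ | a ≤ x ∧ (x : EReal) < b} :=
  fun _ hx => ⟨hx.1, (EReal.coe_le_coe_iff.2 hx.2).trans_lt hRb⟩

section rightMax

variable {b : EReal} {f : ℝ → ℝ} {x y : ℝ}

theorem le_rightMax (hbdd : BddAbove (f '' {z | x ≤ z ∧ (z : EReal) < b}))
    (hx : (x : EReal) < b) : f x ≤ rightMax b f x :=
  le_csSup hbdd ⟨x, ⟨le_rfl, hx⟩, rfl⟩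

theorem rightMax_le {C : ℝ} (hx : (x : EReal) < b)
    (h : ∀ z : ℝ, x ≤ z → (z : EReal) < b → f z ≤ C) : rightMax b f x ≤ C :=
  csSup_le ⟨f x, x, ⟨le_rfl, hx⟩, rfl⟩ <| by
    rintro _ ⟨z, ⟨hxz, hzb⟩, rfl⟩
    exact h z hxz hzb

theorem rightMax_le_rightMax (hbdd : BddAbove (f '' {z | x ≤ z ∧ (z : EReal) < b}))
    (hxy : x ≤ y) (hy : (y : EReal) < b) : rightMax b f y ≤ rightMax b f x :=
  csSup_le_csSup hbdd ⟨f y, y, ⟨le_rfl, hy⟩, rfl⟩ <|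
    image_mono fun _ hz => ⟨hxy.trans hz.1, hz.2⟩

theorem tendsto_rightMax (hb : b ≠ ⊥) {L : ℝ} (hf : Tendsto f (toBFilter b) (𝓝 L)) :
    Tendsto (rightMax b f) (toBFilter b) (𝓝 L) := by
  have hB := toBFilter_hasBasis hb
  refine tendsto_order.2 ⟨fun u hu => ?_, fun u hu => ?_⟩
  · obtain ⟨l, hlb, hl⟩ := hB.eventually_iff.1
      ((hf.eventually (lt_mem_nhds hu)).and (hf.eventually (gt_mem_nhds (lt_add_one L))))
    refine hB.eventually_iff.2
      ⟨l, hlb, fun x hx => (hl hx).1.trans_le (le_rightMax ⟨L + 1, ?_⟩ hx.2)⟩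
    rintro _ ⟨z, ⟨hxz, hzb⟩, rfl⟩
    exact (hl ⟨hx.1.trans_le (EReal.coe_le_coe_iff.2 hxz), hzb⟩).2.le
  · obtain ⟨v, hLv, hvu⟩ := exists_between hu
    obtain ⟨l, hlb, hl⟩ := hB.eventually_iff.1 (hf.eventually (gt_mem_nhds hLv))
    refine hB.eventually_iff.2
      ⟨l, hlb, fun x hx => (rightMax_le hx.2 fun z hxz hzb => ?_).trans_lt hvu⟩
    exact (hl ⟨hx.1.trans_le (EReal.coe_le_coe_iff.2 hxz), hzb⟩).le

end rightMax

theorem MonotoneOn.deriv_nonneg_of_mem_nhds {m : ℝ → ℝ} {s : Set ℝ} {x : ℝ}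
    (hm : MonotoneOn m s) (hs : s ∈ 𝓝 x) : 0 ≤ deriv m x := by
  rw [← derivWithin_of_mem_nhds hs]
  exact hm.derivWithin_nonneg

theorem integral_deriv_eq_sub_of_monotoneOn {a : ℝ} {b : EReal} {m : ℝ → ℝ}
    (hm_mono : MonotoneOn m {x : ℝ | a ≤ x ∧ (x : EReal) < b})
    (hm_rc : ContinuousWithinAt m (Ici a) a)
    (hm_diff : ∀ x : ℝ, a < x → (x : EReal) < b → DifferentiableAt ℝ m x)
    {R : ℝ} (haR : a ≤ R) (hRb : (R : EReal) < b) :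
    ∫ x in a..R, deriv m x = m R - m a := by
  have hsub := Icc_subset_of_coe_lt (a := a) hRb
  have hcont : ContinuousOn m (Icc a R) := fun x hx => by
    rcases hx.1.eq_or_lt with rfl | hax
    · exact hm_rc.mono Icc_subset_Ici_self
    · exact (hm_diff x hax (hsub hx).2).continuousAt.continuousWithinAt
  refine intervalIntegral.integral_eq_sub_of_hasDerivAt_of_le haR hcont
    (fun x hx => (hm_diff x hx.1 (hsub (Ioo_subset_Icc_self hx)).2).hasDerivAt) ?_
  exact (hm_mono.mono (uIcc_of_le haR ▸ hsub)).intervalIntegrable_deriv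

theorem IntervalIntegrable.antitoneOn_mul {g w : ℝ → ℝ} {u v : ℝ} (huv : u ≤ v)
    (hw : IntervalIntegrable w volume u v) (hg : AntitoneOn g (Icc u v)) :
    IntervalIntegrable (fun x => g x * w x) volume u v := by
  have hg_int : IntervalIntegrable g volume u v := (uIcc_of_le huv ▸ hg).intervalIntegrable
  rw [intervalIntegrable_iff_integrableOn_Ioc_of_le huv] at hw hg_int ⊢
  refine hw.bdd_mul hg_int.aestronglyMeasurable (c := max |g v| |g u|) ?_
  refine (ae_restrict_iff' measurableSet_Ioc).2 (ae_of_all _ fun x hx => ?_)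
  have hx' := Ioc_subset_Icc_self hx
  exact abs_le_max_abs_abs (hg hx' (right_mem_Icc.2 huv) hx'.2)
    (hg (left_mem_Icc.2 huv) hx' hx'.1)

theorem tendsto_integral_mul_div_integral {a : ℝ} {b : EReal} (hab : (a : EReal) < b)
    {g w : ℝ → ℝ} (hw_nonneg : ∀ x : ℝ, a < x → (x : EReal) < b → 0 ≤ w x)
    (hw_int : ∀ R : ℝ, a ≤ R → (R : EReal) < b → IntervalIntegrable w volume a R)
    (hgw_int : ∀ R : ℝ, a ≤ R → (R : EReal) < b →
      IntervalIntegrable (fun x => g x * w x) volume a R)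
    (hw_top : Tendsto (fun R => ∫ x in a..R, w x) (toBFilter b) atTop)
    (hg : Tendsto g (toBFilter b) (𝓝 0)) :
    Tendsto (fun R => (∫ x in a..R, w x)⁻¹ * ∫ x in a..R, g x * w x) (toBFilter b) (𝓝 0) := by
  rw [Metric.tendsto_nhds]
  intro ε hε
  obtain ⟨r, har, hrb, hr⟩ := exists_forall_of_eventually_toBFilter hab
    (hg.eventually (Metric.closedBall_mem_nhds (0 : ℝ) (half_pos hε)))
  set K := ∫ x in a..r, g x * w x
  filter_upwards [eventually_toBFilter hrb, hw_top.eventually_gt_atTop (2 * |K| / ε)]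
    with R ⟨hrR, hRb⟩ hKR
  have haR : a ≤ R := har.le.trans hrR.le
  have hWr : 0 ≤ ∫ x in a..r, w x := by
    rw [intervalIntegral.integral_of_le har.le]
    exact setIntegral_nonneg measurableSet_Ioc fun x hx =>
      hw_nonneg x hx.1 ((EReal.coe_le_coe_iff.2 hx.2).trans_lt hrb)
  have htail :
      |∫ x in r..R, g x * w x| ≤ ε / 2 * ((∫ x in a..R, w x) - ∫ x in a..r, w x) := by
    rw [intervalIntegral.integral_interval_sub_left (hw_int R haR hRb) (hw_int r har.le hrb),
      ← intervalIntegral.integral_const_mul, ← Real.norm_eq_abs]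
    refine intervalIntegral.norm_integral_le_of_norm_le hrR.le (ae_of_all _ fun x hx => ?_)
      (((hw_int r har.le hrb).symm.trans (hw_int R haR hRb)).const_mul _)
    have hxb : (x : EReal) < b := (EReal.coe_le_coe_iff.2 hx.2).trans_lt hRb
    have hwx : 0 ≤ w x := hw_nonneg x (har.trans hx.1) hxb
    rw [norm_mul, Real.norm_of_nonneg hwx]
    exact mul_le_mul_of_nonneg_right (by simpa using hr x hx.1.le hxb) hwx
  have hsplit : ∫ x in a..R, g x * w x = K + ∫ x in r..R, g x * w x :=
    (intervalIntegral.integral_add_adjacent_intervals (hgw_int r har.le hrb)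
      ((hgw_int r har.le hrb).symm.trans (hgw_int R haR hRb))).symm
  have hK : 2 * |K| < ε * ∫ x in a..R, w x := by rwa [div_lt_iff₀' hε] at hKR
  have hWR : 0 < ∫ x in a..R, w x := (div_nonneg (by positivity) hε.le).trans_lt hKR
  rw [Real.dist_eq, sub_zero, abs_mul, abs_inv, abs_of_pos hWR, inv_mul_lt_iff₀ hWR, hsplit]
  calc |K + ∫ x in r..R, g x * w x| ≤ |K| + |∫ x in r..R, g x * w x| := abs_add_le _ _
    _ < (∫ x in a..R, w x) * ε := by nlinarith

theorem stmt_7_general (a : ℝ) (b : EReal) (hab : (a : EReal) < b) (m f : ℝ → ℝ)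
    (hm_mono : StrictMonoOn m {x : ℝ | a ≤ x ∧ (x : EReal) < b})
    (hm_rc : ContinuousWithinAt m (Set.Ici a) a)
    (hm_diff : ∀ x : ℝ, a < x → (x : EReal) < b → DifferentiableAt ℝ m x)
    (hm_top : Filter.Tendsto m (toBFilter b) Filter.atTop)
    (hf_bdd : ∃ C : ℝ, ∀ x : ℝ, a ≤ x → (x : EReal) < b → f x ≤ C)
    (hf_zero : Filter.Tendsto f (toBFilter b) (nhds 0)) :
    Filter.Tendsto (fun R => intAvg m (rightMax b f) a R) (toBFilter b) (nhds 0) := by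
  obtain ⟨C, hC⟩ := hf_bdd
  have hm_ftc (R : ℝ) (haR : a ≤ R) (hRb : (R : EReal) < b) :=
    integral_deriv_eq_sub_of_monotoneOn hm_mono.monotoneOn hm_rc hm_diff haR hRb
  have hm'_nonneg (x : ℝ) (hax : a < x) (hxb : (x : EReal) < b) : 0 ≤ deriv m x :=
    hm_mono.monotoneOn.deriv_nonneg_of_mem_nhds <| mem_of_superset
      ((isOpen_Ioi.inter (isOpen_Iio.preimage continuous_coe_real_ereal)).mem_nhds ⟨hax, hxb⟩)
      fun y hy => ⟨hy.1.le, hy.2⟩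
  have hm'_int (R : ℝ) (haR : a ≤ R) (hRb : (R : EReal) < b) :
      IntervalIntegrable (deriv m) volume a R :=
    (hm_mono.monotoneOn.mono (uIcc_of_le haR ▸ Icc_subset_of_coe_lt hRb)).intervalIntegrable_deriv
  have hg_anti (R : ℝ) (hRb : (R : EReal) < b) : AntitoneOn (rightMax b f) (Icc a R) :=
    fun x hx y hy hxy => rightMax_le_rightMax ⟨C, by
      rintro _ ⟨z, ⟨hxz, hzb⟩, rfl⟩
      exact hC z (hx.1.trans hxz) hzb⟩ hxy (Icc_subset_of_coe_lt hRb hy).2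
  have hW : Tendsto (fun R => ∫ x in a..R, deriv m x) (toBFilter b) atTop := by
    refine (tendsto_atTop_add_const_right _ (-m a) hm_top).congr' ?_
    filter_upwards [eventually_toBFilter hab] with R ⟨haR, hRb⟩
    rw [hm_ftc R haR.le hRb, sub_eq_add_neg]
  refine (tendsto_integral_mul_div_integral hab hm'_nonneg hm'_int
    (fun R haR hRb => (hm'_int R haR hRb).antitoneOn_mul haR (hg_anti R hRb)) hW
    (tendsto_rightMax (ne_bot_of_gt hab) hf_zero)).congr' ?_
  filter_upwards [eventually_toBFilter hab] with R ⟨haR, hRb⟩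
  rw [intAvg, hm_ftc R haR.le hRb]

theorem stmt_7 (a : ℝ) (b : EReal) (hab : (a : EReal) < b) (m f : ℝ → ℝ)
    (hm_mono : StrictMonoOn m {x : ℝ | a ≤ x ∧ (x : EReal) < b})
    (hm_rc : ContinuousWithinAt m (Set.Ici a) a)
    (hm_diff : ∀ x : ℝ, a < x → (x : EReal) < b → DifferentiableAt ℝ m x)
    (hm_bdd : ∀ a' b' : ℝ, a < a' → a' ≤ b' → (b' : EReal) < b →
      ∃ C : ℝ, ∀ x ∈ Set.Icc a' b', |deriv m x| ≤ C)
    (hm_top : Filter.Tendsto m (toBFilter b) Filter.atTop)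
    (hf_nonneg : ∀ x : ℝ, a ≤ x → (x : EReal) < b → 0 ≤ f x)
    (hf_int : ∀ c d : ℝ, a ≤ c → c ≤ d → (d : EReal) < b →
      IntervalIntegrable f MeasureTheory.volume c d)
    (hf_bdd : ∃ C : ℝ, ∀ x : ℝ, a ≤ x → (x : EReal) < b → f x ≤ C)
    (hf_zero : Filter.Tendsto f (toBFilter b) (nhds 0)) :
    Filter.Tendsto (fun R => intAvg m (rightMax b f) a R) (toBFilter b) (nhds 0) :=
  stmt_7_general a b hab m f hm_mono hm_rc hm_diff hm_top hf_bdd hf_zero
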